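/- arXiv:1503.09071 — 2 statements merged into one kernel-verified Lean document; each statement's English description precedes it below -/
import Mathlib

section
/- Let a < b < n be positive integers, t1, t2, t3 real, and suppose x ∈ ℝ and integers k1, k2 satisfy −(a·x − (t1+k1)) = λ_x = b·x − (t2+k2) with λ_x > (b−a)/(2n). Let E ≥ λ_x and set z3 = x + (n·λ_x − (a+n)·E)/(a·n), z4 = x + ((b+n)·E − n·λ_x)/(b·n). If there exists z ∈ [z3, z4] with n·z ≡ t3 (mod 1), then μ_{a,b,n}(t1,t2,t3) ≤ E. -/
/-- Distance from a real number to the nearest integer. -/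
noncomputable def dni (u : ℝ) : ℝ := |u - round u|

/-- Approximation cost of `(t1, t2)` relative to the two-element set `{a, b}`. -/
noncomputable def mu2 (a b : ℕ) (t1 t2 : ℝ) : ℝ :=
  ⨅ x : ℝ, max (dni (t1 - x * a)) (dni (t2 - x * b))

/-- Approximation cost of `(t1, t2, t3)` relative to the set `{a, b, n}`. -/
noncomputable def mu3 (a b n : ℕ) (t1 t2 t3 : ℝ) : ℝ :=
  ⨅ x : ℝ, max (dni (t1 - x * a)) (max (dni (t2 - x * b)) (dni (t3 - x * n)))

/-- Angular Kronecker constant of `{a, b, n}`. -/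
noncomputable def alpha3 (a b n : ℕ) : ℝ :=
  sSup {v : ℝ | ∃ t1 t2 t3 : ℝ, v = mu3 a b n t1 t2 t3}

/-- Binary Kronecker constant of `{a, b, n}`. -/
noncomputable def beta3 (a b n : ℕ) : ℝ :=
  sSup {v : ℝ | ∃ t1 t2 t3 : ℝ, t1 ∈ ({0, 1/2} : Set ℝ) ∧ t2 ∈ ({0, 1/2} : Set ℝ) ∧
    t3 ∈ ({0, 1/2} : Set ℝ) ∧ v = mu3 a b n t1 t2 t3}

lemma dni_nonneg (u : ℝ) : 0 ≤ dni u := abs_nonneg _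

lemma dni_le_int (u : ℝ) (m : ℤ) : dni u ≤ |u - m| := round_le u m

lemma mu3_le_of_witness (a b n : ℕ) (t1 t2 t3 E w : ℝ)
    (h1 : dni (t1 - w * a) ≤ E) (h2 : dni (t2 - w * b) ≤ E)
    (h3 : dni (t3 - w * n) ≤ E) : mu3 a b n t1 t2 t3 ≤ E := by
  have hbdd : BddBelow (Set.range fun x : ℝ =>
      max (dni (t1 - x * a)) (max (dni (t2 - x * b)) (dni (t3 - x * n)))) := by
    refine ⟨0, ?_⟩
    rintro v ⟨y, rfl⟩
    exact le_trans (dni_nonneg _) (le_max_left _ _)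
  exact le_trans (ciInf_le hbdd w) (max_le h1 (max_le h2 h3))

set_option maxHeartbeats 2000000 in
theorem stmt_6 (a b n : ℕ) (ha : 0 < a) (hab : a < b) (hbn : b < n)
    (t1 t2 t3 : ℝ) (x lam : ℝ) (k1 k2 : ℤ)
    (hbal1 : -(a * x - (t1 + k1)) = lam) (hbal2 : lam = b * x - (t2 + k2))
    (hbig : lam > ((b : ℝ) - a) / (2 * n))
    (E : ℝ) (hE : E ≥ lam)
    (z : ℝ)
    (hz1 : x + (n * lam - (a + n) * E) / (a * n) ≤ z)
    (hz2 : z ≤ x + ((b + n) * E - n * lam) / (b * n))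
    (hcong : ∃ k : ℤ, (n : ℝ) * z - t3 = k) :
    mu3 a b n t1 t2 t3 ≤ E := by
  obtain ⟨k, hk⟩ := hcong
  have ha' : (0:ℝ) < a := by exact_mod_cast ha
  have hb' : (0:ℝ) < b := by exact_mod_cast ha.trans hab
  have hn' : (0:ℝ) < n := by exact_mod_cast (ha.trans hab).trans hbn
  have hab' : (a:ℝ) < b := by exact_mod_cast hab
  have hbn' : (b:ℝ) < n := by exact_mod_cast hbn
  have ha0 : (a:ℝ) ≠ 0 := ne_of_gt ha'
  have hb0 : (b:ℝ) ≠ 0 := ne_of_gt hb'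
  have hn0 : (n:ℝ) ≠ 0 := ne_of_gt hn'
  have hlam : 0 < lam := lt_trans (div_pos (by linarith) (by positivity)) hbig
  have hEpos : 0 < E := lt_of_lt_of_le hlam hE
  set d := z - x with hd
  rcases le_or_gt (E * ((b:ℝ) - a)) (lam * ((a:ℝ) + b)) with hcase | hcase
  · -- Case A: clamp d into [(lam-E)/a, (E-lam)/b]
    set lo := (lam - E)/(a:ℝ) with hlo
    set hi := (E - lam)/(b:ℝ) with hhi
    set c := max lo (min d hi) with hc
    have halo : (a:ℝ) * lo = lam - E := by rw [hlo]; field_simp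
    have hbhi : (b:ℝ) * hi = E - lam := by rw [hhi]; field_simp
    have hlo0 : lo ≤ 0 := div_nonpos_of_nonpos_of_nonneg (by linarith) ha'.le
    have hhi0 : 0 ≤ hi := div_nonneg (by linarith) hb'.le
    have hlohi : lo ≤ hi := le_trans hlo0 hhi0
    have e1 : ((n:ℝ) * lam - ((a:ℝ) + n) * E) / ((a:ℝ) * n) = lo - E/n := by
      rw [hlo]; field_simp; ring
    have e2 : (((b:ℝ) + n) * E - (n:ℝ) * lam) / ((b:ℝ) * n) = hi + E/n := by
      rw [hhi]; field_simp; ring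
    have hd1 : lo - E/n ≤ d := by rw [hd, ← e1]; linarith
    have hd2 : d ≤ hi + E/n := by rw [hd, ← e2]; linarith
    have hEn : 0 ≤ E/n := by positivity
    have hclo : lo ≤ c := le_max_left _ _
    have hchi : c ≤ hi := max_le hlohi (min_le_right _ _)
    have hcub : c ≤ d + E/n :=
      max_le (by linarith) (le_trans (min_le_left _ _) (by linarith))
    have hclb : d - E/n ≤ c :=
      le_trans (le_min (by linarith) (by linarith)) (le_max_right _ _)
    -- key bounds
    have kA1 : (a:ℝ) * lo ≤ a * c := mul_le_mul_of_nonneg_left hclo ha'.le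
    have kA2 : (a:ℝ) * c ≤ a * hi := mul_le_mul_of_nonneg_left hchi ha'.le
    have kA3 : (b:ℝ) * lo ≤ b * c := mul_le_mul_of_nonneg_left hclo hb'.le
    have kA4 : (b:ℝ) * c ≤ b * hi := mul_le_mul_of_nonneg_left hchi hb'.le
    have hahi : (a:ℝ) * hi ≤ lam + E := by
      rw [hhi, show (a:ℝ) * ((E - lam)/b) = (a * (E - lam))/b from by ring,
        div_le_iff₀ hb']
      nlinarith [mul_le_mul_of_nonneg_right hab'.le hEpos.le,
        mul_nonneg ha'.le hlam.le, mul_nonneg hb'.le hlam.le]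
    have hblo : -E - lam ≤ (b:ℝ) * lo := by
      rw [hlo, show (b:ℝ) * ((lam - E)/a) = (b * (lam - E))/a from by ring,
        le_div_iff₀ ha']
      linarith
    have key1 : |lam - (a:ℝ) * c| ≤ E := abs_le.mpr ⟨by linarith, by linarith⟩
    have key2 : |lam + (b:ℝ) * c| ≤ E := abs_le.mpr ⟨by linarith, by linarith⟩
    apply mu3_le_of_witness a b n t1 t2 t3 E (x + c)
    · refine le_trans (dni_le_int _ (-k1)) ?_
      have e : t1 - (x + c) * (a:ℝ) - ((-k1 : ℤ):ℝ) = lam - a * c := by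
        push_cast; linear_combination hbal1
      rw [e]; exact key1
    · refine le_trans (dni_le_int _ (-k2)) ?_
      have e : t2 - (x + c) * (b:ℝ) - ((-k2 : ℤ):ℝ) = -(lam + b * c) := by
        push_cast; linear_combination hbal2
      rw [e, abs_neg]; exact key2
    · refine le_trans (dni_le_int _ (-k)) ?_
      have e : t3 - (x + c) * (n:ℝ) - ((-k : ℤ):ℝ) = (d - c) * n := by
        push_cast; rw [hd]; linear_combination -hk
      rw [e, abs_mul, abs_of_pos hn']
      have h9 : |d - c| ≤ E/n := abs_le.mpr ⟨by linarith, by linarith⟩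
      calc |d - c| * n ≤ (E/n) * n := mul_le_mul_of_nonneg_right h9 hn'.le
        _ = E := div_mul_cancel₀ E hn0
  · -- Case B: jump to c = d + m/n near p = -lam/b
    set p := -lam/(b:ℝ) with hp
    obtain ⟨m, h12⟩ : ∃ mm : ℤ, |(n:ℝ) * (p - d) - mm| ≤ 1/2 :=
      ⟨round ((n:ℝ) * (p - d)), abs_sub_round _⟩
    set c := d + (m:ℝ)/n with hc
    set r := c - p with hr
    clear_value r c p d
    have hrc : c = p + r := by rw [hr]; ring
    have ediv : ((n:ℝ)*(p - d) - m)/n = (p - d) - (m:ℝ)/n := by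
      rw [sub_div, mul_div_cancel_left₀ _ hn0]
    have habs_r : |r| ≤ 1/(2*(n:ℝ)) := by
      have e : r = -(((n:ℝ) * (p - d) - m)/n) := by
        rw [ediv, hr, hc]; ring
      rw [e, abs_neg, abs_div, abs_of_pos hn', div_le_div_iff₀ hn' (by positivity)]
      nlinarith
    have hru : r ≤ 1/(2*(n:ℝ)) := (abs_le.mp habs_r).2
    have hrl : -(1/(2*(n:ℝ))) ≤ r := (abs_le.mp habs_r).1
    have hbig2 : (b:ℝ) - a < lam * (2*n) := by
      rw [gt_iff_lt, div_lt_iff₀ (by positivity)] at hbig; linarith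
    have hb2nE : (b:ℝ) < 2*n*E := by
      nlinarith [mul_lt_mul_of_pos_right hbig2 (show (0:ℝ) < (a:ℝ)+b by positivity),
        mul_lt_mul_of_pos_left hcase (show (0:ℝ) < 2*n by positivity)]
    have hEb2 : (b:ℝ)/(2*n) ≤ E := by
      rw [div_le_iff₀ (by positivity)]; nlinarith
    have habr1 : (a:ℝ)*b*r ≤ (a:ℝ)*b*(1/(2*n)) :=
      mul_le_mul_of_nonneg_left hru (by positivity)
    have habr2 : (a:ℝ)*b*(-(1/(2*(n:ℝ)))) ≤ (a:ℝ)*b*r :=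
      mul_le_mul_of_nonneg_left hrl (by positivity)
    have hhalf : (a:ℝ)*b*(1/(2*n)) ≤ a*E := by
      rw [show (a:ℝ)*b*(1/(2*n)) = a*(b/(2*n)) from by ring]
      exact mul_le_mul_of_nonneg_left hEb2 ha'.le
    have haEbE : (a:ℝ)*E ≤ b*E := mul_le_mul_of_nonneg_right hab'.le hEpos.le
    have hlamab : 0 ≤ lam * ((a:ℝ) + b) := by positivity
    have ebc : (b:ℝ)*(lam - a*c) = lam*((a:ℝ)+b) - (a:ℝ)*b*r := by
      rw [hrc, hp]; field_simp; ring
    have hbound : |(b:ℝ)*(lam - a*c)| ≤ b*E := by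
      rw [ebc, abs_le]; constructor
      · nlinarith [habr1, hhalf, haEbE, hlamab]
      · nlinarith [habr2, hhalf, haEbE, hcase]
    have key1 : |lam - (a:ℝ)*c| ≤ E := by
      rw [abs_mul, abs_of_pos hb'] at hbound
      exact le_of_mul_le_mul_left hbound hb'
    have eb2 : lam + (b:ℝ)*c = (b:ℝ)*r := by
      rw [hrc, hp]; field_simp; ring
    have key2 : |lam + (b:ℝ)*c| ≤ E := by
      rw [eb2, abs_mul, abs_of_pos hb']
      have h7 : (b:ℝ)*|r| ≤ (b:ℝ)*(1/(2*n)) := mul_le_mul_of_nonneg_left habs_r hb'.le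
      have h8 : (b:ℝ)*(1/(2*(n:ℝ))) = b/(2*n) := by ring
      linarith
    have hcd' : (c - d) * (n:ℝ) = m := by
      rw [show c - d = (m:ℝ)/n from by rw [hc]; ring, div_mul_cancel₀ _ hn0]
    apply mu3_le_of_witness a b n t1 t2 t3 E (x + c)
    · refine le_trans (dni_le_int _ (-k1)) ?_
      have e : t1 - (x + c) * (a:ℝ) - ((-k1 : ℤ):ℝ) = lam - a * c := by
        push_cast; linear_combination hbal1
      rw [e]; exact key1
    · refine le_trans (dni_le_int _ (-k2)) ?_
      have e : t2 - (x + c) * (b:ℝ) - ((-k2 : ℤ):ℝ) = -(lam + b * c) := by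
        push_cast; linear_combination hbal2
      rw [e, abs_neg]; exact key2
    · refine le_trans (dni_le_int _ (-(k + m))) ?_
      have e : t3 - (x + c) * (n:ℝ) - ((-(k + m) : ℤ):ℝ) = 0 := by
        push_cast; linear_combination -hk - hcd' - (n:ℝ)*hd
      rw [e, abs_zero]; exact hEpos.le
end

section
/- Let a < b be coprime positive integers. If θ1, θ2 ∈ {0, 1/2} satisfy μ_{a,b}(θ1,θ2) = 0, then for every positive integer n > b and every real θ3, μ_{a,b,n}(θ1,θ2,θ3) ≤ (3b−a)/(2n). -/
lemma dni_intCast (m : ℤ) : dni m = 0 := by simp [dni]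

lemma dni_add_le (u v : ℝ) : dni (u + v) ≤ dni u + |v| :=
  calc dni (u + v) ≤ |u + v - round u| := round_le _ (round u)
    _ = |(u - round u) + v| := by ring_nf
    _ ≤ dni u + |v| := abs_add_le _ _

lemma exists_dni_sub_mul_eq_zero (t : ℝ) {c : ℝ} (hc : c ≠ 0) :
    ∃ s : ℝ, |s * c| ≤ 1 / 2 ∧ dni (t - s * c) = 0 := by
  refine ⟨(t - round t) / c, ?_, ?_⟩ <;> rw [div_mul_cancel₀ _ hc]
  · exact abs_sub_round t
  · simpa using dni_intCast (round t)

lemma dni_sub_add_mul_le (t x s : ℝ) {c : ℝ} (hc : 0 ≤ c) :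
    dni (t - (x + s) * c) ≤ dni (t - x * c) + |s| * c := by
  calc dni (t - (x + s) * c) = dni ((t - x * c) + -(s * c)) := by ring_nf
    _ ≤ dni (t - x * c) + |s| * c := by
      simpa only [abs_neg, abs_mul, abs_of_nonneg hc] using dni_add_le _ (-(s * c))

lemma mu3_le_mu2_add (a b : ℕ) {n : ℕ} (hn : 0 < n) (t1 t2 t3 : ℝ) :
    mu3 a b n t1 t2 t3 ≤ mu2 a b t1 t2 + max (a : ℝ) b / (2 * n) := by
  have hn' : (0 : ℝ) < n := by exact_mod_cast hn
  have hbdd : BddBelow (Set.range fun x : ℝ =>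
      max (dni (t1 - x * a)) (max (dni (t2 - x * b)) (dni (t3 - x * n)))) :=
    ⟨0, by rintro _ ⟨x, rfl⟩; exact (dni_nonneg _).trans (le_max_left _ _)⟩
  rw [← sub_le_iff_le_add]
  refine le_ciInf fun x => ?_
  obtain ⟨s, hs, hs3⟩ := exists_dni_sub_mul_eq_zero (t3 - x * n) hn'.ne'
  have hs' : |s| ≤ 1 / (2 * n) := by
    rw [abs_mul, abs_of_pos hn'] at hs
    rw [le_div_iff₀ (by positivity)]; linarith
  have hshift : ∀ (t : ℝ) {c : ℝ}, 0 ≤ c → c ≤ max (a : ℝ) b →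
      dni (t - (x + s) * c) ≤ dni (t - x * c) + max (a : ℝ) b / (2 * n) := by
    intro t c hc hcm
    refine (dni_sub_add_mul_le t x s hc).trans (add_le_add_right ?_ _)
    calc |s| * c ≤ 1 / (2 * n) * max (a : ℝ) b := mul_le_mul hs' hcm hc (by positivity)
      _ = max (a : ℝ) b / (2 * n) := by ring
  have h3 : dni (t3 - (x + s) * n) = 0 := by rw [← hs3]; ring_nf
  rw [sub_le_iff_le_add]
  refine (ciInf_le hbdd (x + s)).trans ?_
  rw [h3, max_eq_left (dni_nonneg _), ← max_add_add_right]
  exact max_le_max (hshift t1 (Nat.cast_nonneg a) (le_max_left _ _))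
    (hshift t2 (Nat.cast_nonneg b) (le_max_right _ _))

theorem stmt_12_general (a b : ℕ) (hab : a < b)
    (θ1 θ2 : ℝ)
    (hmu : mu2 a b θ1 θ2 = 0) :
    ∀ n : ℕ, b < n → ∀ θ3 : ℝ,
      mu3 a b n θ1 θ2 θ3 ≤ (3 * (b : ℝ) - a) / (2 * n) := by
  intro n hn θ3
  have hab' : (a : ℝ) ≤ b := by exact_mod_cast hab.le
  calc mu3 a b n θ1 θ2 θ3 ≤ max (a : ℝ) b / (2 * n) := by
        simpa [hmu] using mu3_le_mu2_add a b (by omega) θ1 θ2 θ3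
    _ ≤ (3 * (b : ℝ) - a) / (2 * n) := by
        gcongr
        rw [max_eq_right hab']
        linarith

theorem stmt_12 (a b : ℕ) (ha : 0 < a) (hab : a < b) (hcop : Nat.Coprime a b)
    (θ1 θ2 : ℝ) (hθ1 : θ1 ∈ ({0, 1/2} : Set ℝ)) (hθ2 : θ2 ∈ ({0, 1/2} : Set ℝ))
    (hmu : mu2 a b θ1 θ2 = 0) :
    ∀ n : ℕ, b < n → ∀ θ3 : ℝ,
      mu3 a b n θ1 θ2 θ3 ≤ (3 * (b : ℝ) - a) / (2 * n) :=
  stmt_12_general a b hab θ1 θ2 hmu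
end
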